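/- Let [n] be a set of elements and T_1, …, T_m ⊆ [n] a hitting set instance. Let M = 20 and let ε > 0 be sufficiently small. Consider the weighted graph on vertex set {x, z, y, u, h} ∪ {a_1,…,a_n} ∪ {b_1,…,b_m} with edge weights w(x,z) = M, w(x,b_j) = M + 1.4 + jε, w(z,y) = 1.5, w(z,a_i) = 1 + iε, w(z,u) = 2, w(a_i,u) = 1.1, w(a_i,b_j) = 1 + (i+j)ε whenever i ∈ T_j, and w(b_j,h) = 1 + jε, and let d be the induced shortest-path metric. Then for every j, the iBGP safe set satisfies S(x, b_j) = {x, b_j} ∪ {a_i : i ∈ T_j}; consequently, every feasible edge set E (one in which every ordered pair (p,q) has a q–p path all of whose vertices lie in S(p,q)) contains either the edge {x, b_j} or an edge {x, a_i} with i ∈ T_j. -/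

import Mathlib

/-- The vertices of the basic hitting-set gadget: `x`, the dummy nodes `z`, `y`,
`u`, `h`, element nodes `a i` for `i ∈ [n]` and set nodes `b j` for `j ∈ [m]`. -/
inductive GV (n m : ℕ) : Type
  | x : GV n m
  | z : GV n m
  | y : GV n m
  | u : GV n m
  | h : GV n m
  | a : Fin n → GV n m
  | b : Fin m → GV n m
deriving DecidableEq

/-- `d` is a pseudometric (reflexive, symmetric, triangle inequality). -/
def IsPseudoMetric {α : Type*} (d : α → α → ℝ) : Prop :=
  (∀ p, d p p = 0) ∧ (∀ p q, d p q = d q p) ∧ (∀ p q r, d p r ≤ d p q + d q r)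

/-- `d` is bounded above by the prescribed gadget edge weights (element indices
`i ∈ [n]` and set indices `j ∈ [m]` are 1-based, via `i.val + 1`, `j.val + 1`). -/
def GadgetEdgeBounds {n m : ℕ} (T : Fin m → Finset (Fin n)) (ε : ℝ)
    (d : GV n m → GV n m → ℝ) : Prop :=
  d GV.x GV.z ≤ 20 ∧
  (∀ j : Fin m, d GV.x (GV.b j) ≤ 20 + 1.4 + (j.val + 1) * ε) ∧
  d GV.z GV.y ≤ 1.5 ∧
  (∀ i : Fin n, d GV.z (GV.a i) ≤ 1 + (i.val + 1) * ε) ∧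
  d GV.z GV.u ≤ 2 ∧
  (∀ i : Fin n, d (GV.a i) GV.u ≤ 1.1) ∧
  (∀ i : Fin n, ∀ j : Fin m, i ∈ T j →
    d (GV.a i) (GV.b j) ≤ 1 + ((i.val + 1) + (j.val + 1)) * ε) ∧
  (∀ j : Fin m, d (GV.b j) GV.h ≤ 1 + (j.val + 1) * ε)

/-- `d` is the shortest-path metric of the gadget graph: it is the pointwise
greatest pseudometric bounded above by the gadget edge weights. -/
def IsGadgetSPMetric {n m : ℕ} (T : Fin m → Finset (Fin n)) (ε : ℝ)
    (d : GV n m → GV n m → ℝ) : Prop :=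
  IsPseudoMetric d ∧ GadgetEdgeBounds T ε d ∧
  ∀ d' : GV n m → GV n m → ℝ, IsPseudoMetric d' → GadgetEdgeBounds T ε d' →
    ∀ p q, d' p q ≤ d p q

/-- The iBGP safe set of the ordered pair `(p,q)` for the metric `d`:
`S(p,q) = {w | ∀ r ∈ D(p,q), d(w,q) < d(w,r)} ∪ {q}` where
`D(p,q) = {r | d(p,r) > d(p,q)}`. -/
def iBGPSafeSet {α : Type*} (d : α → α → ℝ) (p q : α) : Set α :=
  {w | ∀ r, d p q < d p r → d w q < d w r} ∪ {q}

/-- `E` is a correct iBGP signaling graph: every ordered pair `(p,q)` has a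
path from `q` to `p` all of whose vertices lie in the safe set `S(p,q)`. -/
def iBGPFeasible {α : Type*} (d : α → α → ℝ) (E : Set (Sym2 α)) : Prop :=
  ∀ p q : α, ∃ w : (SimpleGraph.fromEdgeSet E).Walk q p,
    ∀ v ∈ w.support, v ∈ iBGPSafeSet d p q

/-! The shortest-path metric `d` is the largest pseudometric below the edge weights. Upper
bounds on `d` therefore come from single edges and the triangle inequality, lower bounds from
potentials: a function `F` that changes by at most the weight along every edge gives the
pseudometric `|F p - F q| ≤ d p q`; capped distances from `x`, `a i` and `b j` are such
potentials. With them, the vertices farther from `x` than `b j` are `y`, `u`, `h` and the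
`b j'` with `j < j'`. Each `a i` with `i ∈ T j` is closer to `b j` than to all of these, whereas
`z`, `y`, `u`, `h`, the other `a i` and the other `b j'` are each closer to one of `y`, `u`,
`h` than to `b j`. A feasible path from `b j` to `x` must enter `x` along an edge from this
safe set. -/

lemma IsPseudoMetric.abs_sub {α : Type*} (F : α → ℝ) : IsPseudoMetric fun p q => |F p - F q| :=
  ⟨fun p => by simp, fun p q => abs_sub_comm _ _, fun p q r => abs_sub_le _ _ _⟩

lemma IsPseudoMetric.nonneg {α : Type*} {d : α → α → ℝ} (hd : IsPseudoMetric d) (p q : α) :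
    0 ≤ d p q := by
  have := hd.2.2 p q p
  rw [hd.1 p, hd.2.1 q p] at this
  linarith

lemma iBGPFeasible.exists_mem_iBGPSafeSet_edge {α : Type*} {d : α → α → ℝ} {E : Set (Sym2 α)}
    (hE : iBGPFeasible d E) {p q : α} (hqp : q ≠ p) :
    ∃ v ∈ iBGPSafeSet d p q, v ≠ p ∧ s(p, v) ∈ E := by
  obtain ⟨w, hw⟩ := hE p q
  obtain ⟨hvp, hne⟩ := (SimpleGraph.fromEdgeSet_adj E).1 <|
    w.adj_penultimate (SimpleGraph.Walk.not_nil_of_ne hqp)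
  exact ⟨_, hw _ (w.getVert_mem_support _), hne, Sym2.eq_swap ▸ hvp⟩

lemma IsGadgetSPMetric.sub_le {n m : ℕ} {T : Fin m → Finset (Fin n)} {ε : ℝ}
    {d : GV n m → GV n m → ℝ} (hd : IsGadgetSPMetric T ε d)
    {F : GV n m → ℝ} (hF : GadgetEdgeBounds T ε fun p q => |F p - F q|) (p q : GV n m) :
    F q - F p ≤ d p q :=
  (le_abs_self _).trans <| abs_sub_comm (F p) (F q) ▸ hd.2.2 _ (IsPseudoMetric.abs_sub F) hF p q

def SmallPerturbation (N : ℕ) (ε : ℝ) : Prop :=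
  ∀ k : Fin N, 0 ≤ (k.val + 1 : ℝ) * ε ∧ (k.val + 1 : ℝ) * ε ≤ 1 / 100

lemma smallPerturbation_of_mul_le {N : ℕ} {ε : ℝ} (hε : 0 ≤ ε) (hN : N * ε ≤ 1 / 100) :
    SmallPerturbation N ε := fun k =>
  ⟨by positivity, le_trans (mul_le_mul_of_nonneg_right (by exact_mod_cast k.isLt) hε) hN⟩

namespace GV

variable {n m : ℕ} {T : Fin m → Finset (Fin n)} {ε : ℝ}

def potX (n m : ℕ) (ε : ℝ) : GV n m → ℝ
  | x => 0
  | z => 20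
  | y => 21.5
  | u => 22
  | h => 22.4
  | a i => 21 + (i.val + 1) * ε
  | b j => 21.4 + (j.val + 1) * ε

def potA (T : Fin m → Finset (Fin n)) (ε : ℝ) (i₀ : Fin n) : GV n m → ℝ
  | x => 1.2
  | z => 1 + (i₀.val + 1) * ε
  | y => 1.2
  | u => 1.1
  | h => 1.2
  | a i => if i = i₀ then 0 else 1.2
  | b j => if i₀ ∈ T j then 1 + ((i₀.val + 1) + (j.val + 1)) * ε else 1.2

def potB (T : Fin m → Finset (Fin n)) (ε : ℝ) (j₀ : Fin m) : GV n m → ℝ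
  | x => 1.5
  | z => 2
  | y => 1.5
  | u => 1.5
  | h => 1 + (j₀.val + 1) * ε
  | a i => if i ∈ T j₀ then 1 + ((i.val + 1) + (j₀.val + 1)) * ε else 1.5
  | b j => if j = j₀ then 0 else 1.5

lemma potX_edgeBounds (hn : SmallPerturbation n ε) (hm : SmallPerturbation m ε) :
    GadgetEdgeBounds T ε fun p q => |potX n m ε p - potX n m ε q| := by
  refine ⟨?_, fun j => have := hm j; ?_, ?_, fun i => have := hn i; ?_, ?_,
    fun i => have := hn i; ?_, fun i j _ => have := hn i; have := hm j; ?_,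
    fun j => have := hm j; ?_⟩ <;>
  simp only [potX] <;> rw [abs_le] <;> constructor <;> linarith

lemma potA_edgeBounds (hn : SmallPerturbation n ε) (hm : SmallPerturbation m ε) (i₀ : Fin n) :
    GadgetEdgeBounds T ε fun p q => |potA T ε i₀ p - potA T ε i₀ q| := by
  have := hn i₀
  refine ⟨?_, fun j => have := hm j; ?_, ?_, fun i => have := hn i; ?_, ?_,
    fun i => have := hn i; ?_, fun i j hij => have := hn i; have := hm j; ?_,
    fun j => have := hm j; ?_⟩ <;>
  simp only [potA] <;> (try split_ifs) <;> subst_vars <;> rw [abs_le] <;> constructor <;>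
    first | linarith | contradiction

lemma potB_edgeBounds (hn : SmallPerturbation n ε) (hm : SmallPerturbation m ε) (j₀ : Fin m) :
    GadgetEdgeBounds T ε fun p q => |potB T ε j₀ p - potB T ε j₀ q| := by
  have := hm j₀
  refine ⟨?_, fun j => have := hm j; ?_, ?_, fun i => have := hn i; ?_, ?_,
    fun i => have := hn i; ?_, fun i j hij => have := hn i; have := hm j; ?_,
    fun j => have := hm j; ?_⟩ <;>
  simp only [potB] <;> (try split_ifs) <;> subst_vars <;> rw [abs_le] <;> constructor <;>
    first | linarith | contradiction

section Metric

variable {d : GV n m → GV n m → ℝ}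

lemma potX_le_dist (hd : IsGadgetSPMetric T ε d) (hn : SmallPerturbation n ε)
    (hm : SmallPerturbation m ε) (q : GV n m) : potX n m ε q ≤ d x q := by
  simpa [potX] using hd.sub_le (potX_edgeBounds hn hm) x q

lemma potA_le_dist (hd : IsGadgetSPMetric T ε d) (hn : SmallPerturbation n ε)
    (hm : SmallPerturbation m ε) (i : Fin n) (q : GV n m) : potA T ε i q ≤ d (a i) q := by
  simpa [potA] using hd.sub_le (potA_edgeBounds hn hm i) (a i) q

lemma potB_le_dist (hd : IsGadgetSPMetric T ε d) (hn : SmallPerturbation n ε)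
    (hm : SmallPerturbation m ε) (j : Fin m) (q : GV n m) : potB T ε j q ≤ d (b j) q := by
  simpa [potB] using hd.sub_le (potB_edgeBounds hn hm j) (b j) q

lemma dist_x_b_eq (hd : IsGadgetSPMetric T ε d) (hn : SmallPerturbation n ε)
    (hm : SmallPerturbation m ε) (j : Fin m) : d x (b j) = 21.4 + (j.val + 1) * ε :=
  le_antisymm (by linarith [hd.2.1.2.1 j]) (potX_le_dist hd hn hm (b j))

lemma dist_x_b_lt_dist_x (hd : IsGadgetSPMetric T ε d) (hn : SmallPerturbation n ε)
    (hm : SmallPerturbation m ε) (j : Fin m) :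
    d x (b j) < d x y ∧ d x (b j) < d x u ∧ d x (b j) < d x h := by
  have hy := potX_le_dist hd hn hm y
  have hu := potX_le_dist hd hn hm u
  have hh := potX_le_dist hd hn hm h
  simp only [potX] at hy hu hh
  rw [dist_x_b_eq hd hn hm]
  have := hm j
  refine ⟨?_, ?_, ?_⟩ <;> linarith

lemma eq_of_dist_x_b_lt_dist_x (hd : IsGadgetSPMetric T ε d) (hn : SmallPerturbation n ε)
    (hm : SmallPerturbation m ε) {j : Fin m} {r : GV n m} (hr : d x (b j) < d x r) :
    r = y ∨ r = u ∨ r = h ∨ ∃ j', (j.val + 1 : ℝ) * ε < (j'.val + 1) * ε ∧ r = b j' := by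
  obtain ⟨hxz, hxb, -, hza, -⟩ := hd.2.1
  rw [dist_x_b_eq hd hn hm] at hr
  have := hm j
  cases r with
  | x => linarith [hd.1.1 x]
  | z => linarith
  | y => simp
  | u => simp
  | h => simp
  | a i => linarith [hd.1.2.2 x z (a i), hza i, hn i]
  | b j' => exact Or.inr <| Or.inr <| Or.inr ⟨j', by linarith [hxb j'], rfl⟩

lemma a_mem_iBGPSafeSet (hd : IsGadgetSPMetric T ε d) (hn : SmallPerturbation n ε)
    (hm : SmallPerturbation m ε) {i : Fin n} {j : Fin m} (hi : i ∈ T j) :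
    a i ∈ iBGPSafeSet d x (b j) := by
  refine Or.inl fun r hr => ?_
  obtain ⟨-, -, -, -, -, -, hab, -⟩ := hd.2.1
  have := hab i j hi
  have := hn i
  have := hm j
  have hA := potA_le_dist hd hn hm i r
  rcases eq_of_dist_x_b_lt_dist_x hd hn hm hr with rfl | rfl | rfl | ⟨j', hjj', rfl⟩ <;>
    simp only [potA] at hA <;> (try split_ifs at hA) <;> linarith

lemma mem_of_mem_iBGPSafeSet (hd : IsGadgetSPMetric T ε d) (hn : SmallPerturbation n ε)
    (hm : SmallPerturbation m ε) {j : Fin m} {w : GV n m} (hw : w ∈ iBGPSafeSet d x (b j)) :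
    w = x ∨ w = b j ∨ ∃ i ∈ T j, w = a i := by
  obtain ⟨hd0, hsymm, -⟩ := hd.1
  obtain ⟨-, -, hzy, -, -, hau, -, hbh⟩ := hd.2.1
  rcases hw with hw | rfl
  · obtain ⟨hy, hu, hh⟩ := dist_x_b_lt_dist_x hd hn hm j
    cases w with
    | x => exact Or.inl rfl
    | z =>
      have hbz : (2 : ℝ) ≤ d (b j) z := potB_le_dist hd hn hm j z
      linarith [hw y hy, hsymm z (b j)]
    | y => linarith [hw y hy, hd0 y, hd.1.nonneg y (b j)]
    | u => linarith [hw u hu, hd0 u, hd.1.nonneg u (b j)]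
    | h => linarith [hw h hh, hd0 h, hd.1.nonneg h (b j)]
    | a i =>
      by_cases hi : i ∈ T j
      · exact Or.inr (Or.inr ⟨i, hi, rfl⟩)
      · have := potA_le_dist hd hn hm i (b j)
        simp only [potA, if_neg hi] at this
        linarith [hw u hu, hau i]
    | b j' =>
      by_cases hj : j' = j
      · exact Or.inr (Or.inl (hj ▸ rfl))
      · have := potB_le_dist hd hn hm j' (b j)
        simp only [potB, if_neg (Ne.symm hj)] at this
        linarith [hw h hh, hbh j', hm j']
  · exact Or.inr (Or.inl rfl)

lemma iBGPSafeSet_x_b (hd : IsGadgetSPMetric T ε d) (hn : SmallPerturbation n ε)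
    (hm : SmallPerturbation m ε) (j : Fin m) :
    iBGPSafeSet d x (b j) = ({x, b j} : Set (GV n m)) ∪ {w | ∃ i ∈ T j, w = a i} := by
  ext w
  refine ⟨fun hw => ?_, ?_⟩
  · simpa only [Set.mem_union, Set.mem_insert_iff, Set.mem_singleton_iff, Set.mem_ofPred_eq,
      or_assoc] using mem_of_mem_iBGPSafeSet hd hn hm hw
  · rintro ((rfl | rfl) | ⟨i, hi, rfl⟩)
    · exact Or.inl fun r hr => hr
    · exact Or.inr rfl
    · exact a_mem_iBGPSafeSet hd hn hm hi

end Metric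

end GV

/-- In the basic gadget (with sufficiently small `ε > 0` and `d` the induced
shortest-path metric), for every `j` the safe set `S(x, b j)` is exactly
`{x, b j} ∪ {a i : i ∈ T j}`; consequently every feasible edge set contains
either the edge `{x, b j}` or an edge `{x, a i}` with `i ∈ T j`. -/
theorem stmt5 (n m : ℕ) (T : Fin m → Finset (Fin n)) :
    ∃ ε₀ : ℝ, 0 < ε₀ ∧ ∀ ε : ℝ, 0 < ε → ε < ε₀ →
      ∀ d : GV n m → GV n m → ℝ, IsGadgetSPMetric T ε d →
        ∀ j : Fin m,
          (iBGPSafeSet d GV.x (GV.b j) =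
            ({GV.x, GV.b j} : Set (GV n m)) ∪ {w | ∃ i ∈ T j, w = GV.a i}) ∧
          ∀ E : Set (Sym2 (GV n m)), iBGPFeasible d E →
            s(GV.x, GV.b j) ∈ E ∨ ∃ i ∈ T j, s(GV.x, GV.a i) ∈ E := by
  refine ⟨1 / (100 * (n + m + 1)), by positivity, fun ε hε hεlt d hd j => ?_⟩
  have hsum : ((n : ℝ) + m + 1) * ε ≤ 1 / 100 := by
    rw [lt_div_iff₀ (by positivity)] at hεlt
    linarith
  have hn : SmallPerturbation n ε := smallPerturbation_of_mul_le hε.le (by nlinarith)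
  have hm : SmallPerturbation m ε := smallPerturbation_of_mul_le hε.le (by nlinarith)
  refine ⟨GV.iBGPSafeSet_x_b hd hn hm j, fun E hE => ?_⟩
  obtain ⟨v, hv, hvx, hxv⟩ := hE.exists_mem_iBGPSafeSet_edge (nofun : GV.b j ≠ GV.x)
  rcases GV.mem_of_mem_iBGPSafeSet hd hn hm hv with rfl | rfl | ⟨i, hi, rfl⟩
  · exact absurd rfl hvx
  · exact Or.inl hxv
  · exact Or.inr ⟨i, hi, hxv⟩
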